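/- arXiv:1209.1454 — 6 statements merged into one kernel-verified Lean document; each statement's English description precedes it below -/
import Mathlib

section
/- Let f : A → X and g : B → X be normal epimorphisms of pointed sets, and let u, v : A → B be pointed maps with g∘u = f and g∘v = f. Let E = {a ∈ A : u(a) = v(a)} (a pointed subset, since ⋆ ∈ E) with inclusion w : E → A. Then the composite h = f∘w : E → X is again a normal epimorphism of pointed sets. -/
/-! Since `g` is injective away from its kernel and `g ∘ u = g ∘ v`, the maps `u` and `v` agree at
every point that `f` does not send to the basepoint. So the equalizer contains the basepoint and
everything outside the kernel of `f`, and restricting a normal epimorphism to such a subset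
leaves it a normal epimorphism. -/

def NormalEpi {A X : Type} (a₀ : A) (x₀ : X) (f : A → X) : Prop :=
  f a₀ = x₀ ∧ Function.Surjective f ∧ ∀ a a', f a = f a' → f a = x₀ ∨ a = a'

theorem NormalEpi.restrict {A X : Type} {a₀ : A} {x₀ : X} {f : A → X}
    (hf : NormalEpi a₀ x₀ f) {p : A → Prop} (h₀ : p a₀) (hp : ∀ a, f a ≠ x₀ → p a) :
    NormalEpi (⟨a₀, h₀⟩ : Subtype p) x₀ (fun e => f e.1) := by
  obtain ⟨hf₀, hf_surj, hf_inj⟩ := hf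
  refine ⟨hf₀, fun x => ?_, fun e e' he => (hf_inj _ _ he).imp_right Subtype.ext⟩
  obtain ⟨a, rfl⟩ := hf_surj x
  by_cases ha : f a = x₀
  · exact ⟨⟨a₀, h₀⟩, hf₀.trans ha.symm⟩
  · exact ⟨⟨a, hp a ha⟩, rfl⟩

theorem eq_or_eq_of_comp_eq_comp {A B X : Type} {x₀ : X} {f : A → X} {g : B → X}
    (hg : ∀ b b', g b = g b' → g b = x₀ ∨ b = b') {u v : A → B}
    (hgu : ∀ a, g (u a) = f a) (hgv : ∀ a, g (v a) = f a) (a : A) :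
    f a = x₀ ∨ u a = v a :=
  hgu a ▸ hg (u a) (v a) ((hgu a).trans (hgv a).symm)

/-- The equalizer of two parallel pointed maps between normal epimorphisms over `X`,
composed with `f`, is again a normal epimorphism. -/
theorem stmt_2 {A B X : Type} (a₀ : A) (b₀ : B) (x₀ : X) (f : A → X) (g : B → X)
    (hf : NormalEpi a₀ x₀ f) (hg : NormalEpi b₀ x₀ g)
    (u v : A → B) (hu0 : u a₀ = b₀) (hv0 : v a₀ = b₀)
    (hgu : ∀ a, g (u a) = f a) (hgv : ∀ a, g (v a) = f a) :
    NormalEpi (⟨a₀, by rw [hu0, hv0]⟩ : {a : A // u a = v a}) x₀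
      (fun e => f e.1) :=
  hf.restrict _ fun a ha => (eq_or_eq_of_comp_eq_comp hg.2.2 hgu hgv a).resolve_left ha
end

section
/- Let (f_i : A_i → X)_{i ∈ I} be a family of normal epimorphisms of pointed sets, and let P = {(a_i)_{i ∈ I} ∈ ∏_i A_i : f_i(a_i) = f_j(a_j) for all i, j} be their wide pullback over X, with f : P → X the common composite. Then f is a normal epimorphism of pointed sets. -/
section WidePullback

variable {I : Type*} {A : I → Type*} {X : Type*} (f : ∀ i, A i → X)

abbrev WidePullbackSet : Type _ := {p : ∀ i, A i // ∀ i i', f i (p i) = f i' (p i')}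

theorem widePullbackSet_surjective (hf : ∀ i, Function.Surjective (f i)) (j : I) :
    Function.Surjective fun p : WidePullbackSet f => f j (p.1 j) := by
  intro x
  choose a ha using fun i => hf i x
  exact ⟨⟨a, fun i i' => by rw [ha, ha]⟩, ha j⟩

theorem widePullbackSet_eq_or_eq {x₀ : X}
    (hf : ∀ i a a', f i a = f i a' → f i a = x₀ ∨ a = a') (j : I) (p q : WidePullbackSet f)
    (hpq : f j (p.1 j) = f j (q.1 j)) : f j (p.1 j) = x₀ ∨ p = q := by
  refine or_iff_not_imp_left.2 fun hx => Subtype.ext (funext fun i => ?_)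
  have hi : f i (p.1 i) = f i (q.1 i) := by rw [p.2 i j, q.2 i j, hpq]
  exact (hf i _ _ hi).resolve_left fun h => hx ((p.2 i j).symm.trans h)

end WidePullback

/-- The wide pullback of a family of normal epimorphisms of pointed sets over `X`,
with the common composite to `X`, is again a normal epimorphism. -/
theorem stmt_3 {I : Type} {A : I → Type} {X : Type} (a₀ : ∀ i, A i) (x₀ : X)
    (f : ∀ i, A i → X) (hf : ∀ i, NormalEpi (a₀ i) x₀ (f i)) (j : I) :
    NormalEpi
      (⟨fun i => a₀ i, fun i i' => by rw [(hf i).1, (hf i').1]⟩ :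
        {p : ∀ i, A i // ∀ i i', f i (p i) = f i' (p i')})
      x₀ (fun p => f j (p.1 j)) :=
  ⟨(hf j).1, widePullbackSet_surjective f (fun i => (hf i).2.1) j,
    widePullbackSet_eq_or_eq f (fun i => (hf i).2.2) j⟩
end

section
/- Let X = (f : X₁ → X₀) be an object of the arrow category of pointed sets. Define [X] = (h : X₁ → X₀ ∨ f⁻¹(⋆)) where X₀ ∨ f⁻¹(⋆) is the wedge sum, h(x) = x ∈ f⁻¹(⋆) if f(x) = ⋆ and h(x) = f(x) ∈ X₀ otherwise, and define χ : [X] → X to be the identity on the upper level and, on the lower level, the identity on X₀ and the map collapsing f⁻¹(⋆) to ⋆. Then χ is a normal epimorphism in the arrow category of pointed sets (i.e., both components χ₁ and χ₀ are normal epimorphisms of pointed sets), and its kernel is ({⋆} → f⁻¹(⋆)). -/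
/-- The relation generating the wedge sum of pointed sets. -/
def WRel {A B : Type} (a₀ : A) (b₀ : B) : A ⊕ B → A ⊕ B → Prop :=
  fun p q => (p = Sum.inl a₀ ∧ q = Sum.inr b₀) ∨ (p = Sum.inr b₀ ∧ q = Sum.inl a₀)

/-- The wedge sum of the pointed sets `(A, a₀)` and `(B, b₀)`. -/
def Wedge {A B : Type} (a₀ : A) (b₀ : B) : Type := Quot (WRel a₀ b₀)

/-- The kernel `f⁻¹(⋆)` of a pointed map. -/
def Ker {X₁ X₀ : Type} (x₀ : X₀) (f : X₁ → X₀) : Type := {x : X₁ // f x = x₀}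

/-- The lower level `X₀ ∨ f⁻¹(⋆)` of the object `[X]`. -/
def Lw {X₁ X₀ : Type} (x₁₀ : X₁) (x₀ : X₀) (f : X₁ → X₀) (hf : f x₁₀ = x₀) : Type :=
  Wedge x₀ (⟨x₁₀, hf⟩ : Ker x₀ f)

open Classical in
/-- The structure map `h : X₁ → X₀ ∨ f⁻¹(⋆)` of `[X]`:
`x ↦ x ∈ f⁻¹(⋆)` if `f x = ⋆` and `x ↦ f x ∈ X₀` otherwise. -/
noncomputable def hmap {X₁ X₀ : Type} (x₁₀ : X₁) (x₀ : X₀) (f : X₁ → X₀)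
    (hf : f x₁₀ = x₀) : X₁ → Lw x₁₀ x₀ f hf :=
  fun x =>
    if hx : f x = x₀ then Quot.mk _ (Sum.inr (⟨x, hx⟩ : Ker x₀ f))
    else Quot.mk _ (Sum.inl (f x))

/-- The lower component of `χ : [X] → X`: the identity on `X₀`,
collapsing `f⁻¹(⋆)` to `⋆`. -/
def chi0 {X₁ X₀ : Type} (x₁₀ : X₁) (x₀ : X₀) (f : X₁ → X₀) (hf : f x₁₀ = x₀) :
    Lw x₁₀ x₀ f hf → X₀ :=
  Quot.lift (Sum.elim id (fun _ => x₀))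
    (by rintro p q (⟨rfl, rfl⟩ | ⟨rfl, rfl⟩) <;> rfl)

theorem normalEpi_id {A : Type} (a₀ : A) : NormalEpi a₀ a₀ (id : A → A) :=
  ⟨rfl, Function.surjective_id, fun _ _ h => Or.inr h⟩

namespace Wedge

variable {A B : Type} {a₀ : A} {b₀ : B}

theorem mk_inl_eq_mk_inr_basepoint :
    (Quot.mk _ (Sum.inl a₀) : Wedge a₀ b₀) = Quot.mk _ (Sum.inr b₀) :=
  Quot.sound (Or.inl ⟨rfl, rfl⟩)

variable (a₀ b₀)

def collapseRight : Wedge a₀ b₀ → A :=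
  Quot.lift (Sum.elim id fun _ => a₀) (by rintro p q (⟨rfl, rfl⟩ | ⟨rfl, rfl⟩) <;> rfl)

theorem collapseRight_normalEpi :
    NormalEpi (Quot.mk _ (Sum.inl a₀) : Wedge a₀ b₀) a₀ (collapseRight a₀ b₀) := by
  refine ⟨rfl, fun a => ⟨Quot.mk _ (Sum.inl a), rfl⟩, ?_⟩
  rintro ⟨a | b⟩ ⟨a' | b'⟩ h
  · exact Or.inr (congrArg _ (congrArg Sum.inl h))
  · exact Or.inl h
  all_goals exact Or.inl rfl

theorem collapseRight_eq_basepoint_iff (l : Wedge a₀ b₀) :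
    collapseRight a₀ b₀ l = a₀ ↔ ∃ b : B, l = Quot.mk _ (Sum.inr b) := by
  constructor
  · rcases l with ⟨a | b⟩
    · rintro (rfl : a = a₀)
      exact ⟨b₀, mk_inl_eq_mk_inr_basepoint⟩
    · exact fun _ => ⟨b, rfl⟩
  · rintro ⟨b, rfl⟩
    rfl

end Wedge

theorem chi0_hmap {X₁ X₀ : Type} (x₁₀ : X₁) (x₀ : X₀) (f : X₁ → X₀) (hf : f x₁₀ = x₀)
    (x : X₁) : chi0 x₁₀ x₀ f hf (hmap x₁₀ x₀ f hf x) = f x := by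
  by_cases hx : f x = x₀ <;> simp [hmap, hx, chi0]

/-- `χ : [X] → X` is a normal epimorphism in the arrow category of pointed sets
(the upper component `χ₁ = id` and the lower component `χ₀` are normal epis, and
the square commutes), and its kernel is `({⋆} → f⁻¹(⋆))` componentwise. -/
theorem stmt_6 {X₁ X₀ : Type} (x₁₀ : X₁) (x₀ : X₀) (f : X₁ → X₀) (hf : f x₁₀ = x₀) :
    NormalEpi x₁₀ x₁₀ (id : X₁ → X₁) ∧
    NormalEpi (Quot.mk _ (Sum.inl x₀) : Lw x₁₀ x₀ f hf) x₀ (chi0 x₁₀ x₀ f hf) ∧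
    (∀ x : X₁, chi0 x₁₀ x₀ f hf (hmap x₁₀ x₀ f hf x) = f x) ∧
    (∀ x : X₁, (id x : X₁) = x₁₀ ↔ x = x₁₀) ∧
    (∀ l : Lw x₁₀ x₀ f hf,
      chi0 x₁₀ x₀ f hf l = x₀ ↔ ∃ κ : Ker x₀ f, l = Quot.mk _ (Sum.inr κ)) :=
  -- `chi0` is definitionally `Wedge.collapseRight` for the wedge `X₀ ∨ f⁻¹(⋆)`.
  ⟨normalEpi_id x₁₀, Wedge.collapseRight_normalEpi _ _, chi0_hmap x₁₀ x₀ f hf,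
    fun _ => Iff.rfl, Wedge.collapseRight_eq_basepoint_iff _ _⟩
end

section
/- With X = (f : X₁ → X₀) an object of the arrow category of pointed sets and χ : [X] → X the morphism defined by [X] = (h : X₁ → X₀ ∨ f⁻¹(⋆)) as above, χ is an initial normal cover: for every normal epimorphism φ : A → X in the arrow category of pointed sets, there exists a unique morphism ψ : [X] → A with φ∘ψ = χ. -/
/-
The upper component of `ψ` is forced to be a pointed section of `φ₁`, and the restriction of the
lower component to `X₀` a pointed section of `φ₀`; a normal epimorphism is injective away from the
fibre over `⋆`, so it has exactly one pointed section. On the summand `f⁻¹(⋆)` the lower component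
is forced by the square: `ψ₀ k = ψ₀ (h k) = g (ψ₁ k)`. Conversely these choices commute with the
structure maps because `g (s₁ x)` and `s₀ (f x)` have the same image `f x` under `φ₀`, which is
not `⋆` when `h x` lands in `X₀`.
-/

namespace NormalEpi

variable {A X : Type} {a₀ : A} {x₀ : X} {φ : A → X}

theorem eq_of_map_eq_of_ne (hφ : NormalEpi a₀ x₀ φ) {a a' : A} (h : φ a = φ a')
    (hne : φ a ≠ x₀) : a = a' :=
  (hφ.2.2 a a' h).resolve_left hne

theorem exists_pointed_section (hφ : NormalEpi a₀ x₀ φ) :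
    ∃ s : X → A, s x₀ = a₀ ∧ ∀ x, φ (s x) = x := by
  classical
  refine ⟨Function.update (Function.surjInv hφ.2.1) x₀ a₀, by simp, fun x => ?_⟩
  by_cases hx : x = x₀
  · subst hx
    simpa using hφ.1
  · simpa [hx] using Function.surjInv_eq hφ.2.1 x

theorem pointed_section_unique (hφ : NormalEpi a₀ x₀ φ) {s t : X → A}
    (hs₀ : s x₀ = a₀) (hs : ∀ x, φ (s x) = x) (ht₀ : t x₀ = a₀) (ht : ∀ x, φ (t x) = x) :
    s = t := by
  funext x
  by_cases hx : x = x₀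
  · rw [hx, hs₀, ht₀]
  · exact hφ.eq_of_map_eq_of_ne ((hs x).trans (ht x).symm) (by rwa [hs])

end NormalEpi

namespace Wedge

variable {A B C : Type} {a₀ : A} {b₀ : B}

def lift (u : A → C) (v : B → C) (h : u a₀ = v b₀) : Wedge a₀ b₀ → C :=
  Quot.lift (Sum.elim u v) (by rintro p q (⟨rfl, rfl⟩ | ⟨rfl, rfl⟩) <;> simp [h])

theorem hom_ext {s t : Wedge a₀ b₀ → C}
    (hl : ∀ a, s (Quot.mk _ (Sum.inl a)) = t (Quot.mk _ (Sum.inl a)))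
    (hr : ∀ b, s (Quot.mk _ (Sum.inr b)) = t (Quot.mk _ (Sum.inr b))) : s = t := by
  funext l
  induction l using Quot.ind with
  | _ p => cases p with
    | inl a => exact hl a
    | inr b => exact hr b

end Wedge

section StructureMap

variable {X₁ X₀ : Type} {x₁₀ : X₁} {x₀ : X₀} {f : X₁ → X₀} {hf : f x₁₀ = x₀}

theorem hmap_of_eq {x : X₁} (hx : f x = x₀) :
    hmap x₁₀ x₀ f hf x = Quot.mk _ (Sum.inr ⟨x, hx⟩) :=
  dif_pos hx

theorem hmap_of_ne {x : X₁} (hx : f x ≠ x₀) :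
    hmap x₁₀ x₀ f hf x = Quot.mk _ (Sum.inl (f x)) :=
  dif_neg hx

end StructureMap

/-- `χ : [X] → X` is an initial normal cover in the arrow category of pointed sets:
every normal epimorphism `φ : A → X` (both components normal epis, commuting square)
admits a unique morphism `ψ : [X] → A` of the arrow category with `φ ∘ ψ = χ`. -/
theorem stmt_7 {X₁ X₀ A₁ A₀ : Type} (x₁₀ : X₁) (x₀ : X₀) (f : X₁ → X₀)
    (hf : f x₁₀ = x₀)
    (a₁₀ : A₁) (a₀₀ : A₀) (g : A₁ → A₀) (hg : g a₁₀ = a₀₀)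
    (φ₁ : A₁ → X₁) (φ₀ : A₀ → X₀)
    (hsq : ∀ a, f (φ₁ a) = φ₀ (g a))
    (h1 : NormalEpi a₁₀ x₁₀ φ₁) (h0 : NormalEpi a₀₀ x₀ φ₀) :
    ∃! ψ : (X₁ → A₁) × (Lw x₁₀ x₀ f hf → A₀),
      ψ.1 x₁₀ = a₁₀ ∧ ψ.2 (Quot.mk _ (Sum.inl x₀)) = a₀₀ ∧
      (∀ x : X₁, g (ψ.1 x) = ψ.2 (hmap x₁₀ x₀ f hf x)) ∧
      (∀ x : X₁, φ₁ (ψ.1 x) = x) ∧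
      (∀ l : Lw x₁₀ x₀ f hf, φ₀ (ψ.2 l) = chi0 x₁₀ x₀ f hf l) := by
  obtain ⟨s₁, hs₁pt, hs₁⟩ := h1.exists_pointed_section
  obtain ⟨s₀, hs₀pt, hs₀⟩ := h0.exists_pointed_section
  have hφ₀s₁ (x : X₁) : φ₀ (g (s₁ x)) = f x := by rw [← hsq, hs₁]
  let ψ₀ : Lw x₁₀ x₀ f hf → A₀ :=
    Wedge.lift s₀ (fun k => g (s₁ k.1)) (by simp only [hs₀pt, hs₁pt, hg])
  have hψ₀ (x : X₁) : g (s₁ x) = ψ₀ (hmap x₁₀ x₀ f hf x) := by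
    by_cases hx : f x = x₀
    · rw [hmap_of_eq hx]
      rfl
    · rw [hmap_of_ne hx]
      exact h0.eq_of_map_eq_of_ne ((hφ₀s₁ x).trans (hs₀ _).symm) (by rwa [hφ₀s₁])
  refine ⟨⟨s₁, ψ₀⟩, ⟨hs₁pt, hs₀pt, hψ₀, hs₁, ?_⟩, ?_⟩
  · intro l
    induction l using Quot.ind with
    | _ p => cases p with
      | inl x => exact hs₀ x
      | inr k => exact (hφ₀s₁ k.1).trans k.2
  · rintro ⟨t₁, t₀⟩ ⟨ht₁pt, ht₀pt, ht, ht₁, ht₀⟩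
    obtain rfl : t₁ = s₁ := h1.pointed_section_unique ht₁pt ht₁ hs₁pt hs₁
    refine Prod.ext rfl (Wedge.hom_ext (fun x => ?_) fun k => ?_)
    · have hinl := h0.pointed_section_unique (s := fun x => t₀ (Quot.mk _ (Sum.inl x)))
        ht₀pt (fun x => ht₀ _) hs₀pt hs₀
      exact congrFun hinl x
    · rw [← hmap_of_eq k.2, ← ht, hψ₀]
end

section
/- Let X = (f : X₁ → X₀) be an object of the arrow category of pointed sets such that there exists a ∈ X₁ with a ≠ ⋆ and f(a) = ⋆. Then the short exact sequence K → [X] → X (with K = ({⋆} → f⁻¹(⋆)) the kernel of the initial normal cover χ : [X] → X) does not split: there is no morphism r : [X] → K in the arrow category with r restricting to the identity on K. -/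
theorem hmap_of_mem_ker {X₁ X₀ : Type} (x₁₀ : X₁) (x₀ : X₀) (f : X₁ → X₀)
    (hf : f x₁₀ = x₀) {x : X₁} (hx : f x = x₀) :
    hmap x₁₀ x₀ f hf x = Quot.mk _ (Sum.inr (⟨x, hx⟩ : Ker x₀ f)) :=
  dif_pos hx

/-- If there is `a ≠ ⋆` in `X₁` with `f a = ⋆`, the short exact sequence
`K → [X] → X` does not split: there is no morphism `r : [X] → K` of the arrow
category restricting to the identity on `K = ({⋆} → f⁻¹(⋆))`. -/
theorem stmt_8 {X₁ X₀ : Type} (x₁₀ : X₁) (x₀ : X₀) (f : X₁ → X₀) (hf : f x₁₀ = x₀)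
    (a : X₁) (ha : a ≠ x₁₀) (hfa : f a = x₀) :
    ¬ ∃ r : (X₁ → Unit) × (Lw x₁₀ x₀ f hf → Ker x₀ f),
        (∀ x : X₁, r.2 (hmap x₁₀ x₀ f hf x) = (⟨x₁₀, hf⟩ : Ker x₀ f)) ∧
        (∀ κ : Ker x₀ f, r.2 (Quot.mk _ (Sum.inr κ)) = κ) := by
  rintro ⟨r, hr_base, hr_id⟩
  have hr_a := hr_base a
  rw [hmap_of_mem_ker x₁₀ x₀ f hf hfa] at hr_a
  have h_a_eq_base : (⟨a, hfa⟩ : Ker x₀ f) = ⟨x₁₀, hf⟩ := (hr_id ⟨a, hfa⟩).symm.trans hr_a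
  exact ha (congrArg Subtype.val h_a_eq_base)
end

section
/- The order dual of the partially ordered set obtained from ℕ × ℕ (with the componentwise order) by adjoining a top element is a frame: it is a complete lattice in which a ⊓ (⨆_i b_i) = ⨆_i (a ⊓ b_i) for every element a and every family (b_i). -/
/-!
`WithTop (α × β)` embeds into `WithTop α × WithTop β` as the pairs whose coordinates are both
finite or both `⊤`. This embedding is the upper adjoint of the retraction sending every pair with
an infinite coordinate to `⊤`, so it preserves all infima; it also preserves binary suprema. Hence
the coframe law of `WithTop α × WithTop β`, a product of complete linear orders, restricts to
`WithTop (α × β)`, and the order dual of a coframe is a frame.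
-/

namespace WithTop

variable {α β : Type*}

def toProdWithTop (x : WithTop (α × β)) : WithTop α × WithTop β :=
  (x.map Prod.fst, x.map Prod.snd)

def ofProdWithTop (p : WithTop α × WithTop β) : WithTop (α × β) :=
  WithTop.map₂ Prod.mk p.1 p.2

lemma ofProdWithTop_toProdWithTop (x : WithTop (α × β)) :
    ofProdWithTop (toProdWithTop x) = x := by
  cases x <;> rfl

lemma gc_ofProdWithTop_toProdWithTop [Preorder α] [Preorder β] :
    GaloisConnection (ofProdWithTop (α := α) (β := β)) toProdWithTop := by
  rintro ⟨a, b⟩ x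
  induction a <;> induction b <;> induction x <;> simp [ofProdWithTop, toProdWithTop, Prod.le_def]

def giProdWithTop [Preorder α] [Preorder β] :
    GaloisInsertion (ofProdWithTop (α := α) (β := β)) toProdWithTop :=
  gc_ofProdWithTop_toProdWithTop.toGaloisInsertion fun x => (ofProdWithTop_toProdWithTop x).ge

lemma toProdWithTop_sup [SemilatticeSup α] [SemilatticeSup β] (x y : WithTop (α × β)) :
    toProdWithTop (x ⊔ y) = toProdWithTop x ⊔ toProdWithTop y := by
  induction x <;> induction y <;> simp [toProdWithTop, ← WithTop.coe_sup]

noncomputable abbrev prodCoframe [ConditionallyCompleteLinearOrderBot α]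
    [ConditionallyCompleteLinearOrderBot β] : Order.Coframe (WithTop (α × β)) :=
  letI : CompleteLattice (WithTop (α × β)) := giProdWithTop.liftCompleteLattice
  Order.Coframe.ofMinimalAxioms <| Function.coframeMinimalAxioms .of toProdWithTop
    giProdWithTop.u_le_u_iff
    (fun _ _ => by
      change toProdWithTop (ofProdWithTop _) = _
      rw [← toProdWithTop_sup, ofProdWithTop_toProdWithTop])
    fun _ => giProdWithTop.gc.u_sInf

end WithTop

/-- The order dual of `ℕ × ℕ` (componentwise order) with a top element adjoined is a
frame: it carries a complete lattice structure, compatible with its order, in which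
binary meets distribute over arbitrary joins. -/
theorem stmt_10 :
    ∃ inst : CompleteLattice ((WithTop (ℕ × ℕ))ᵒᵈ),
      (∀ a b : (WithTop (ℕ × ℕ))ᵒᵈ, inst.le a b ↔ a ≤ b) ∧
      ∀ (a : (WithTop (ℕ × ℕ))ᵒᵈ) (I : Type) (b : I → (WithTop (ℕ × ℕ))ᵒᵈ),
        inst.inf a (inst.sSup (Set.range b)) =
          inst.sSup (Set.range fun i => inst.inf a (b i)) := by
  let := WithTop.prodCoframe (α := ℕ) (β := ℕ)
  exact ⟨inferInstance, fun _ _ => Iff.rfl, fun a _ b => inf_iSup_eq a b⟩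
end
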